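/- arXiv:0904.0879 — 2 statements merged into one kernel-verified Lean document; each statement's English description precedes it below -/
import Mathlib

section
/- The binary entropy function H is strictly concave on [0,1], and for any p ∈ (0,1/2), the function D ↦ H(p ∗ D) − H(D) is strictly decreasing in D on (0, 1/2). -/
def binConv (p q : ℝ) : ℝ := p * (1 - q) + q * (1 - p)

noncomputable def binH (x : ℝ) : ℝ := -x * Real.logb 2 x - (1 - x) * Real.logb 2 (1 - x)

/-!
Since `binH = binEntropy / log 2`, concavity is Mathlib's `Real.strictConcave_binEntropy`.
For the rate, write `H' x = log₂ (1 - x) - log₂ x` and note `p ∗ D = p + (1 - 2p) D`, so the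
derivative in `D` is `(1 - 2p) H'(p ∗ D) - H'(D)`. On `(0, 1/2)` the function `H'` is positive and
strictly decreasing, and `D < p ∗ D < 1/2`; hence `(1 - 2p) H'(p ∗ D) < H'(p ∗ D) < H'(D)`.
-/

open Real Set

theorem StrictConcaveOn.smul {𝕜 E β : Type*} [CommSemiring 𝕜] [PartialOrder 𝕜]
    [AddCommMonoid E] [AddCommMonoid β] [PartialOrder β] [SMul 𝕜 E] [Module 𝕜 β]
    [PosSMulStrictMono 𝕜 β]
    {s : Set E} {f : E → β} {c : 𝕜} (hc : 0 < c) (hf : StrictConcaveOn 𝕜 s f) :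
    StrictConcaveOn 𝕜 s fun x => c • f x :=
  ⟨hf.1, fun x hx y hy hxy a b ha hb hab =>
    calc
      a • c • f x + b • c • f y = c • (a • f x + b • f y) := by
        rw [smul_add, smul_comm c, smul_comm c]
      _ < c • f (a • x + b • y) := smul_lt_smul_of_pos_left (hf.2 hx hy hxy ha hb hab) hc⟩

lemma binH_eq_inv_log_two_mul : binH = fun x => (log 2)⁻¹ * binEntropy x := by
  ext x
  simp only [binH, binEntropy, logb, log_inv]
  ring

lemma strictConcaveOn_binH : StrictConcaveOn ℝ (Icc 0 1) binH := by
  rw [binH_eq_inv_log_two_mul]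
  exact strictConcave_binEntropy.smul (inv_pos.2 (log_pos one_lt_two))

lemma continuous_binH : Continuous binH := by
  rw [binH_eq_inv_log_two_mul]
  fun_prop

lemma hasDerivAt_binH {x : ℝ} (h₀ : x ≠ 0) (h₁ : x ≠ 1) :
    HasDerivAt binH (logb 2 (1 - x) - logb 2 x) x := by
  rw [binH_eq_inv_log_two_mul, logb, logb, ← sub_div, div_eq_inv_mul]
  exact (hasDerivAt_binEntropy h₀ h₁).const_mul _

lemma logb_one_sub_sub_logb_pos {x : ℝ} (h₀ : 0 < x) (h : x < 1 / 2) :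
    0 < logb 2 (1 - x) - logb 2 x :=
  sub_pos.2 (logb_lt_logb one_lt_two h₀ (by linarith))

lemma strictAntiOn_logb_one_sub_sub_logb :
    StrictAntiOn (fun x => logb 2 (1 - x) - logb 2 x) (Ioo 0 1) := by
  intro x ⟨hx₀, _⟩ y ⟨_, hy₁⟩ hxy
  have h₁ : logb 2 (1 - y) < logb 2 (1 - x) := logb_lt_logb one_lt_two (by linarith) (by linarith)
  have h₂ : logb 2 x < logb 2 y := logb_lt_logb one_lt_two hx₀ hxy
  linarith

lemma binConv_eq (p q : ℝ) : binConv p q = p + (1 - 2 * p) * q := by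
  unfold binConv
  ring

lemma continuous_binConv (p : ℝ) : Continuous (binConv p) := by
  unfold binConv
  fun_prop

lemma hasDerivAt_binConv (p q : ℝ) : HasDerivAt (binConv p) (1 - 2 * p) q := by
  simpa only [funext (binConv_eq p), mul_one] using
    ((hasDerivAt_id' q).const_mul (1 - 2 * p)).const_add p

lemma lt_binConv {p q : ℝ} (hp : 0 < p) (hq : q < 1 / 2) : q < binConv p q := by
  rw [binConv_eq]
  nlinarith

lemma binConv_lt_half {p q : ℝ} (hp : p < 1 / 2) (hq : q < 1 / 2) : binConv p q < 1 / 2 := by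
  rw [binConv_eq]
  nlinarith

lemma strictAntiOn_binH_binConv_sub_binH {p : ℝ} (hp₀ : 0 < p) (hp : p < 1 / 2) :
    StrictAntiOn (fun D => binH (binConv p D) - binH D) (Ioo 0 (1 / 2)) := by
  set H' : ℝ → ℝ := fun x => logb 2 (1 - x) - logb 2 x
  refine strictAntiOn_of_hasDerivWithinAt_neg (convex_Ioo 0 (1 / 2))
    (f' := fun D => H' (binConv p D) * (1 - 2 * p) - H' D)
    ((continuous_binH.comp (continuous_binConv p)).sub continuous_binH).continuousOn ?_ ?_
  all_goals
    rw [interior_Ioo]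
    rintro D ⟨hD₀, hD⟩
    have hDc : D < binConv p D := lt_binConv hp₀ hD
    have hc : binConv p D < 1 / 2 := binConv_lt_half hp hD
  · exact (((hasDerivAt_binH (by linarith) (by linarith)).comp D (hasDerivAt_binConv p D)).sub
      (hasDerivAt_binH hD₀.ne' (by linarith))).hasDerivWithinAt
  · have hH'c : 0 < H' (binConv p D) := logb_one_sub_sub_logb_pos (by linarith) hc
    calc H' (binConv p D) * (1 - 2 * p) - H' D
        < H' (binConv p D) - H' D :=
          sub_lt_sub_right (mul_lt_of_lt_one_right hH'c (by linarith)) _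
      _ < 0 := sub_neg.2 <| strictAntiOn_logb_one_sub_sub_logb ⟨hD₀, by linarith⟩
          ⟨by linarith, by linarith⟩ hDc

theorem binH_strictConcave_and_rate_strictAnti :
    StrictConcaveOn ℝ (Set.Icc (0:ℝ) 1) binH ∧
    ∀ p ∈ Set.Ioo (0:ℝ) (1/2),
      StrictAntiOn (fun D => binH (binConv p D) - binH D) (Set.Ioo (0:ℝ) (1/2)) :=
  ⟨strictConcaveOn_binH, fun _ hp => strictAntiOn_binH_binConv_sub_binH hp.1 hp.2⟩
end

section
/- For all p ∈ (0, 1/2), we have 1 − 2^{−H(p)} ∈ (p, 1/2), that is, p < 1 − 2^{−H(p)} < 1/2. -/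
lemma binH_eq (x : ℝ) : binH x = Real.binEntropy x / Real.log 2 := by
  simp [binH, Real.binEntropy, Real.logb, Real.log_inv]
  ring

theorem cost_threshold_strictly_between (p : ℝ) (hp : p ∈ Set.Ioo (0:ℝ) (1/2)) :
    p < 1 - (2:ℝ) ^ (-(binH p)) ∧ 1 - (2:ℝ) ^ (-(binH p)) < 1/2 := by
  obtain ⟨hp0, hp2⟩ := hp
  have hp1 : p < 1 := by linarith
  have hlog2 : (0:ℝ) < Real.log 2 := Real.log_pos (by norm_num)
  have h1p : (0:ℝ) < 1 - p := by linarith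
  constructor
  · -- p < 1 - 2^(-binH p) ⇔ 2^(-binH p) < 1 - p
    have key : -(binH p) < Real.logb 2 (1 - p) := by
      rw [binH_eq, Real.logb, ← neg_div, div_lt_div_iff_of_pos_right hlog2, neg_lt]
      have : -Real.log (1 - p) < Real.binEntropy p := by
        rw [Real.binEntropy]
        have hlogratio : 0 < Real.log p⁻¹ - Real.log (1 - p)⁻¹ := by
          rw [sub_pos]
          apply Real.log_lt_log (by positivity)
          exact inv_strictAnti₀ hp0 (by linarith)
        nlinarith [Real.log_inv (1 - p)]
      linarith
    have := Real.rpow_lt_rpow_left_iff (x := (2:ℝ)) (by norm_num) |>.mpr key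
    rw [Real.rpow_logb (by norm_num) (by norm_num) h1p] at this
    linarith
  · -- ⇔ 1/2 < 2^(-binH p) ⇔ -1 < -binH p ⇔ binH p < 1
    have hH : binH p < 1 := by
      rw [binH_eq, div_lt_one hlog2]
      exact Real.binEntropy_lt_log_two.2 (by intro h; rw [h] at hp2; norm_num at hp2)
    have key : (-1 : ℝ) < -(binH p) := by linarith
    have := Real.rpow_lt_rpow_left_iff (x := (2:ℝ)) (by norm_num) |>.mpr key
    rw [Real.rpow_neg_one] at this
    norm_num at this ⊢
    linarith
end
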